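/- arXiv:1506.01042 — 3 statements merged into one kernel-verified Lean document; each statement's English description precedes it below -/
import Mathlib

section
/- Let n ≥ 1 and let x_1, x_2, ..., x_{n-1} be pairwise distinct nonnegative integers. Then there exists a nonnegative integer z, distinct from each x_i for 1 ≤ i ≤ n-1, such that the n-heap Antonim position (x_1, x_2, ..., x_{n-1}, z) is a P-position. -/
/-- A legal move in Antonim: strictly decrease one coordinate, keeping all
entries pairwise distinct (injective). -/
def AntonimMove {n : ℕ} (x y : Fin n → ℕ) : Prop :=
  Function.Injective y ∧ ∃ i : Fin n, y i < x i ∧ ∀ j : Fin n, j ≠ i → y j = x j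

/-- A position is a P-position iff every legal move from it leads to a
non-P-position. -/
def AntonimP {n : ℕ} (x : Fin n → ℕ) : Prop :=
  ∀ y : Fin n → ℕ, AntonimMove x y → ¬ AntonimP y
termination_by ∑ i, x i
decreasing_by
  rename_i hmove
  obtain ⟨_, i, hlt, heq⟩ := hmove
  apply Finset.sum_lt_sum
  · intro j _
    by_cases hj : j = i
    · subst hj; exact le_of_lt hlt
    · exact le_of_eq (heq j hj)
  · exact ⟨i, Finset.mem_univ i, hlt⟩

lemma antonimP_iff {n : ℕ} (x : Fin n → ℕ) :
    AntonimP x ↔ ∀ y, AntonimMove x y → ¬ AntonimP y := by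
  rw [AntonimP]

lemma not_antonimP_iff {n : ℕ} (x : Fin n → ℕ) :
    ¬ AntonimP x ↔ ∃ y, AntonimMove x y ∧ AntonimP y := by
  rw [antonimP_iff]; push_neg; rfl

lemma antonim_key {m : ℕ} (x : Fin m → ℕ)
    (hcon : ∀ w : ℕ, (∀ i, w ≠ x i) → ¬ AntonimP (Fin.snoc x w))
    (z : ℕ) (hz : ∀ i, z ≠ x i) :
    ∃ p : Fin m × ℕ, p.2 < x p.1 ∧
      Function.Injective (Fin.snoc (Function.update x p.1 p.2) z : Fin (m+1) → ℕ) ∧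
      AntonimP (Fin.snoc (Function.update x p.1 p.2) z) := by
  obtain ⟨y, ⟨hyinj, i, hlt, heq⟩, hyP⟩ := (not_antonimP_iff _).mp (hcon z hz)
  rcases Fin.eq_castSucc_or_eq_last i with ⟨i', rfl⟩ | rfl
  · refine ⟨(i', y (Fin.castSucc i')), ?_, ?_, ?_⟩
    · have := hlt
      rwa [Fin.snoc_castSucc] at this
    all_goals {
      have hyform : y = Fin.snoc (Function.update x i' (y (Fin.castSucc i'))) z := by
        funext j
        rcases Fin.eq_castSucc_or_eq_last j with ⟨k, rfl⟩ | rfl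
        · by_cases hk : k = i'
          · subst hk; simp
          · rw [Fin.snoc_castSucc, Function.update_of_ne hk,
              heq _ (by simpa using (Fin.castSucc_injective m).ne hk)]
            simp
        · rw [heq _ (Fin.castSucc_lt_last i').ne', Fin.snoc_last, Fin.snoc_last]
      first
        | exact hyform ▸ hyinj
        | exact hyform ▸ hyP }
  · exfalso
    set z' := y (Fin.last m) with hz'
    have hyform : y = Fin.snoc x z' := by
      funext j
      rcases Fin.eq_castSucc_or_eq_last j with ⟨k, rfl⟩ | rfl
      · rw [heq _ (Fin.castSucc_lt_last k).ne, Fin.snoc_castSucc, Fin.snoc_castSucc]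
      · rw [Fin.snoc_last]
    have hz'ne : ∀ k, z' ≠ x k := by
      intro k hk
      have h1 : y (Fin.castSucc k) = x k := by
        rw [heq _ (Fin.castSucc_lt_last k).ne, Fin.snoc_castSucc]
      exact (Fin.castSucc_lt_last k).ne (hyinj (h1.trans hk.symm))
    exact hcon z' hz'ne (hyform ▸ hyP)

lemma antonim_no_two {m : ℕ} (u : Fin m → ℕ) (z z' : ℕ) (hzz : z < z')
    (hinj : Function.Injective (Fin.snoc u z : Fin (m+1) → ℕ))
    (hP : AntonimP (Fin.snoc u z)) (hP' : AntonimP (Fin.snoc u z')) : False := by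
  have hmove : AntonimMove (Fin.snoc u z') (Fin.snoc u z) := by
    refine ⟨hinj, Fin.last m, ?_, ?_⟩
    · simpa using hzz
    · intro j hj
      obtain ⟨k, rfl⟩ := (Fin.eq_castSucc_or_eq_last j).resolve_right hj
      simp
  exact (antonimP_iff _).mp hP' _ hmove hP

/-- For any pairwise distinct nonnegative integers x_1, ..., x_{n-1} there is a
nonnegative integer z, distinct from every x_i, making
(x_1, ..., x_{n-1}, z) a P-position of n-heap Antonim. -/
theorem antonim_exists_P_extension (n : ℕ) (hn : 1 ≤ n) (x : Fin (n - 1) → ℕ)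
    (hx : Function.Injective x) :
    ∃ z : ℕ, (∀ i : Fin (n - 1), z ≠ x i) ∧ AntonimP (Fin.snoc x z) := by
  classical
  by_contra hcon
  push_neg at hcon
  have hT : {z : ℕ | ∀ i, z ≠ x i}.Infinite := by
    have hfin : (Set.range x).Finite := Set.finite_range x
    have h2 := hfin.infinite_compl
    convert h2 using 1
    ext z
    simp [Set.mem_range, not_exists, eq_comm]
  rcases Nat.eq_zero_or_pos (n - 1) with hm0 | hm0
  · have hz : ∀ i : Fin (n - 1), (0 : ℕ) ≠ x i := fun i => absurd i.2 (by omega)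
    obtain ⟨y, ⟨hyinj, i, hlt, heq⟩, hyP⟩ := (not_antonimP_iff _).mp (hcon 0 hz)
    have hi : i = Fin.last (n - 1) := by
      rcases Fin.eq_castSucc_or_eq_last i with ⟨i', rfl⟩ | rfl
      · exact absurd i'.2 (by omega)
      · rfl
    rw [hi, Fin.snoc_last] at hlt
    omega
  · have : Nonempty (Fin (n - 1)) := ⟨⟨0, hm0⟩⟩
    set f : ℕ → Fin (n - 1) × ℕ := fun z =>
      if h : ∀ i, z ≠ x i then (antonim_key x hcon z h).choose
      else Classical.arbitrary _ with hf
    set M := Finset.univ.sup x with hM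
    have hmap : Set.MapsTo f {z : ℕ | ∀ i, z ≠ x i}
        ((Set.univ : Set (Fin (n - 1))) ×ˢ Set.Iio (M + 1)) := by
      intro z hz
      have hspec := (antonim_key x hcon z hz).choose_spec
      have hfz : f z = (antonim_key x hcon z hz).choose := dif_pos hz
      rw [hfz]
      refine ⟨Set.mem_univ _, ?_⟩
      have h1 : ((antonim_key x hcon z hz).choose).2 < x ((antonim_key x hcon z hz).choose).1 :=
        hspec.1
      have hle : x ((antonim_key x hcon z hz).choose).1 ≤ M :=
        Finset.le_sup (Finset.mem_univ _)
      simp only [Set.mem_Iio]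
      omega
    obtain ⟨a, ha, b, hb, hab, hfab⟩ :=
      hT.exists_ne_map_eq_of_mapsTo hmap (Set.finite_univ.prod (Set.finite_Iio _))
    have hfa : f a = (antonim_key x hcon a ha).choose := dif_pos ha
    have hfb : f b = (antonim_key x hcon b hb).choose := dif_pos hb
    have hsa := (antonim_key x hcon a ha).choose_spec
    have hsb := (antonim_key x hcon b hb).choose_spec
    rw [← hfa] at hsa
    rw [← hfb, ← hfab] at hsb
    set u := Function.update x (f a).1 (f a).2 with hu
    rcases hab.lt_or_gt with h | h
    · exact antonim_no_two u a b h hsa.2.1 hsa.2.2 hsb.2.2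
    · exact antonim_no_two u b a h hsb.2.1 hsb.2.2 hsa.2.2
end

section
/- Let x_1, x_2, z be pairwise distinct nonnegative integers. The 3-heap Antonim position (x_1, x_2, z) is a P-position if and only if the 3-heap Nim position (x_1+1, x_2+1, z+1) is a P-position, i.e., if and only if (x_1+1) XOR (x_2+1) XOR (z+1) = 0, where XOR denotes bitwise exclusive or on nonnegative integers. -/
open Function

theorem AntonimMove.sum_lt {n : ℕ} {x y : Fin n → ℕ} (h : AntonimMove x y) :
    ∑ i, y i < ∑ i, x i := by
  obtain ⟨-, i, hlt, heq⟩ := h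
  refine Finset.sum_lt_sum (fun j _ => ?_) ⟨i, Finset.mem_univ i, hlt⟩
  rcases eq_or_ne j i with rfl | hj
  · exact hlt.le
  · exact (heq j hj).le

theorem AntonimMove.exists_eq_update {n : ℕ} {x y : Fin n → ℕ} (h : AntonimMove x y) :
    ∃ i, y i < x i ∧ y = update x i (y i) := by
  obtain ⟨-, i, hlt, heq⟩ := h
  exact ⟨i, hlt, eq_update_iff.2 ⟨rfl, heq⟩⟩

theorem antonimMove_update {n : ℕ} {x : Fin n → ℕ} {i : Fin n} {v : ℕ}
    (hinj : Injective (update x i v)) (hv : v < x i) : AntonimMove x (update x i v) :=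
  ⟨hinj, i, by simpa using hv, fun _ hj => update_of_ne hj _ _⟩

theorem antonimP_iff_of_kernel {n : ℕ} (Q : (Fin n → ℕ) → Prop)
    (hindep : ∀ x y, Injective x → Q x → AntonimMove x y → ¬ Q y)
    (habsorb : ∀ x, Injective x → ¬ Q x → ∃ y, AntonimMove x y ∧ Q y)
    {x : Fin n → ℕ} (hx : Injective x) : AntonimP x ↔ Q x := by
  induction hs : ∑ i, x i using Nat.strong_induction_on generalizing x with
  | _ s ih =>
  have IH : ∀ y, AntonimMove x y → (AntonimP y ↔ Q y) :=
    fun y hy => ih _ (hs ▸ hy.sum_lt) hy.1 rfl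
  rw [AntonimP]
  constructor
  · intro hP
    by_contra hQ
    obtain ⟨y, hy, hQy⟩ := habsorb x hx hQ
    exact hP y hy ((IH y hy).2 hQy)
  · intro hQ y hy hPy
    exact hindep x y hx hQ hy ((IH y hy).1 hPy)

def nimSum3 (s : Fin 3 → ℕ) : ℕ := s 0 ^^^ s 1 ^^^ s 2

theorem nimSum3_update (s : Fin 3 → ℕ) (i : Fin 3) (v : ℕ) :
    nimSum3 (update s i v) = nimSum3 s ^^^ s i ^^^ v := by
  fin_cases i <;> grind [nimSum3, update]

theorem nimSum3_xor_eq_update_zero (s : Fin 3 → ℕ) (i : Fin 3) :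
    nimSum3 s ^^^ s i = nimSum3 (update s i 0) := by
  rw [nimSum3_update, Nat.xor_zero]

theorem nimSum3_xor_ne_zero {s : Fin 3 → ℕ} (hs : Injective s) (i : Fin 3) :
    nimSum3 s ^^^ s i ≠ 0 := by
  have hne : ∀ j k : Fin 3, j ≠ k → s j ^^^ s k ≠ 0 := fun j k hjk h =>
    hjk (hs (Nat.eq_of_xor_eq_zero h))
  rw [nimSum3_xor_eq_update_zero]
  fin_cases i <;> simpa [nimSum3, update] using hne _ _ (by decide)

theorem exists_nimSum3_xor_lt {s : Fin 3 → ℕ} (h : nimSum3 s ≠ 0) :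
    ∃ i, nimSum3 s ^^^ s i < s i := by
  simp only [nimSum3_xor_eq_update_zero]
  rcases Nat.xor_trichotomy h with h | h | h
  · exact ⟨0, by simpa [nimSum3, update] using h⟩
  · exact ⟨1, by simpa [nimSum3, update, Nat.xor_comm] using h⟩
  · exact ⟨2, by simpa [nimSum3, update] using h⟩

theorem injective_of_nimSum3_eq_zero {s : Fin 3 → ℕ} (hpos : ∀ i, s i ≠ 0)
    (h : nimSum3 s = 0) : Injective s := by
  have hothers : ∀ i, nimSum3 (update s i 0) = s i := fun i => by
    rw [← nimSum3_xor_eq_update_zero, h, Nat.zero_xor]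
  intro i j hij
  have hi := hothers i
  fin_cases i <;> fin_cases j <;> simp at hij ⊢ <;> simp [nimSum3, update, hij, hpos] at hi

theorem update_add_one {ι α : Type*} [DecidableEq ι] [Add α] [One α] (x : ι → α) (i : ι)
    (v : α) :
    update x i v + 1 = update (x + 1) i (v + 1) := by
  ext j
  rcases eq_or_ne j i with rfl | hj <;> simp [*]

theorem AntonimMove.nimSum3_ne_zero {x y : Fin 3 → ℕ} (hxy : AntonimMove x y)
    (hx : nimSum3 (x + 1) = 0) : nimSum3 (y + 1) ≠ 0 := by
  obtain ⟨i, hlt, hy⟩ := hxy.exists_eq_update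
  rw [hy, update_add_one, nimSum3_update, hx, Nat.zero_xor]
  intro h
  exact hlt.ne' (by simpa using Nat.eq_of_xor_eq_zero h)

theorem exists_antonimMove_nimSum3_eq_zero {x : Fin 3 → ℕ} (hx : Injective x)
    (h : nimSum3 (x + 1) ≠ 0) : ∃ y, AntonimMove x y ∧ nimSum3 (y + 1) = 0 := by
  obtain ⟨i, hi⟩ := exists_nimSum3_xor_lt h
  set w := nimSum3 (x + 1) ^^^ (x + 1) i
  have hw : w ≠ 0 := nimSum3_xor_ne_zero ((add_left_injective 1).comp hx) i
  have hzero : nimSum3 (update x i (w - 1) + 1) = 0 := by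
    rw [update_add_one, Nat.sub_add_cancel (Nat.one_le_iff_ne_zero.2 hw), nimSum3_update,
      Nat.xor_self]
  refine ⟨_, antonimMove_update (fun j k hjk => ?_) ?_, hzero⟩
  · exact injective_of_nimSum3_eq_zero (fun _ => Nat.succ_ne_zero _) hzero
      (congrArg (· + 1) hjk)
  · simp only [Pi.add_apply, Pi.one_apply] at hi
    omega

/-- The 3-heap Antonim position (x₁, x₂, z) (with pairwise distinct entries)
is a P-position iff (x₁+1) XOR (x₂+1) XOR (z+1) = 0, i.e. iff
(x₁+1, x₂+1, z+1) is a Nim P-position. -/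
theorem antonim_three_heap_iff_nim (x₁ x₂ z : ℕ)
    (h₁₂ : x₁ ≠ x₂) (h₁z : x₁ ≠ z) (h₂z : x₂ ≠ z) :
    AntonimP ![x₁, x₂, z] ↔ (x₁ + 1) ^^^ (x₂ + 1) ^^^ (z + 1) = 0 := by
  have hinj : Injective ![x₁, x₂, z] := by
    intro i j hij
    fin_cases i <;> fin_cases j <;> simp_all
  rw [antonimP_iff_of_kernel (fun x => nimSum3 (x + 1) = 0)
    (fun _ _ _ hx hxy => hxy.nimSum3_ne_zero hx)
    (fun _ hx h => exists_antonimMove_nimSum3_eq_zero hx h) hinj]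
  rfl
end

section
/- Let x_1, ..., x_{n-1} be pairwise distinct positive integers. Let A be the set of all nonnegative integers α such that there exist an index j with 1 ≤ j ≤ n-1 and an integer y_j with 0 < y_j ≤ x_j for which (x_1, ..., x_{j-1}, x_j − y_j, x_{j+1}, ..., x_{n-1}, α) is a P-position of n-heap Antonim. Let S be the set of nonnegative integers not in A ∪ {x_1, ..., x_{n-1}}, and let z be the least element of S. Then (x_1, ..., x_{n-1}, z) is a P-position of n-heap Antonim. -/
/-- Let x₁, ..., x_{n-1} be pairwise distinct positive integers, A the set of
α such that removing 0 < yⱼ ≤ xⱼ chips from some heap j and appending α gives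
a P-position, S the complement of A ∪ {x₁, ..., x_{n-1}} in ℕ, and z the least
element of S.  Then (x₁, ..., x_{n-1}, z) is a P-position. -/
theorem antonim_mex_is_P (n : ℕ) (x : Fin n → ℕ) (z : ℕ)
    (hpos : ∀ i, 0 < x i) (hx : Function.Injective x)
    (hz : IsLeast ({m : ℕ | m ∉
        ({α : ℕ | ∃ j : Fin n, ∃ y : ℕ, 0 < y ∧ y ≤ x j ∧
            Function.Injective
              (Fin.snoc (Function.update x j (x j - y)) α : Fin (n + 1) → ℕ) ∧
            AntonimP (Fin.snoc (Function.update x j (x j - y)) α : Fin (n + 1) → ℕ)}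
          ∪ Set.range x)}) z) :
    AntonimP (Fin.snoc x z : Fin (n + 1) → ℕ) := by
  obtain ⟨hzS, hzmin⟩ := hz
  rw [AntonimP]
  intro q hq hqP
  obtain ⟨hinj, i, hlt, heq⟩ := hq
  by_cases hi : i = Fin.last n
  · -- the move decreased the last coordinate z to z'
    subst hi
    set z' := q (Fin.last n) with hz'
    have hq_eq : q = (Fin.snoc x z' : Fin (n + 1) → ℕ) := by
      funext k
      refine Fin.lastCases ?_ ?_ k
      · simp [hz']
      · intro m
        rw [heq (Fin.castSucc m) (Fin.castSucc_lt_last m).ne, Fin.snoc_castSucc,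
          Fin.snoc_castSucc]
    have hz'lt : z' < z := by simpa using hlt
    have hz'notrange : z' ∉ Set.range x := by
      rintro ⟨k, hk⟩
      have h1 : q (Fin.castSucc k) = x k := by
        rw [heq (Fin.castSucc k) (Fin.castSucc_lt_last k).ne, Fin.snoc_castSucc]
      have h2 : q (Fin.castSucc k) = q (Fin.last n) := by rw [h1, hk, hz']
      exact absurd (hinj h2) (Fin.castSucc_lt_last k).ne
    have hz'A : z' ∈ {α : ℕ | ∃ j : Fin n, ∃ y : ℕ, 0 < y ∧ y ≤ x j ∧
        Function.Injective
          (Fin.snoc (Function.update x j (x j - y)) α : Fin (n + 1) → ℕ) ∧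
        AntonimP (Fin.snoc (Function.update x j (x j - y)) α : Fin (n + 1) → ℕ)} := by
      by_contra hA
      have hmem : z' ∈ {m : ℕ | m ∉
          ({α : ℕ | ∃ j : Fin n, ∃ y : ℕ, 0 < y ∧ y ≤ x j ∧
              Function.Injective
                (Fin.snoc (Function.update x j (x j - y)) α : Fin (n + 1) → ℕ) ∧
              AntonimP (Fin.snoc (Function.update x j (x j - y)) α : Fin (n + 1) → ℕ)}
            ∪ Set.range x)} := by
        intro h
        rcases h with h | h
        · exact hA h
        · exact hz'notrange h
      exact absurd (hzmin hmem) (not_le.mpr hz'lt)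
    obtain ⟨j, y, hy0, hyx, hinj', hP'⟩ := hz'A
    rw [AntonimP] at hqP
    refine hqP (Fin.snoc (Function.update x j (x j - y)) z') ⟨hinj', Fin.castSucc j, ?_, ?_⟩ hP'
    · rw [hq_eq, Fin.snoc_castSucc, Fin.snoc_castSucc, Function.update_self]
      exact Nat.sub_lt (hpos j) hy0
    · intro k hk
      rw [hq_eq]
      rcases Fin.eq_castSucc_or_eq_last k with ⟨m, rfl⟩ | rfl
      · have hmj : m ≠ j := fun h => hk (by rw [h])
        rw [Fin.snoc_castSucc, Fin.snoc_castSucc, Function.update_of_ne hmj]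
      · simp
  · -- the move decreased some heap coordinate x j
    obtain ⟨j, rfl⟩ := Fin.exists_castSucc_eq.mpr hi
    have hxj : q (Fin.castSucc j) < x j := by simpa using hlt
    set y : ℕ := x j - q (Fin.castSucc j) with hy
    have hy0 : 0 < y := Nat.sub_pos_of_lt hxj
    have hyx : y ≤ x j := Nat.sub_le _ _
    have hv : x j - y = q (Fin.castSucc j) := by
      omega
    have hq_eq : q = (Fin.snoc (Function.update x j (x j - y)) z : Fin (n + 1) → ℕ) := by
      funext k
      refine Fin.lastCases ?_ ?_ k
      · rw [heq (Fin.last n) (Fin.castSucc_lt_last j).ne', Fin.snoc_last, Fin.snoc_last]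
      · intro m
        by_cases hm : m = j
        · subst hm
          rw [Fin.snoc_castSucc, Function.update_self, hv]
        · rw [heq (Fin.castSucc m) (fun h => hm (Fin.castSucc_injective n h)),
            Fin.snoc_castSucc, Fin.snoc_castSucc, Function.update_of_ne hm]
    rw [hq_eq] at hinj hqP
    exact hzS (Or.inl ⟨j, y, hy0, hyx, hinj, hqP⟩)
end
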